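/- arXiv:2412.09650 — 4 statements merged into one kernel-verified Lean document; each statement's English description precedes it below -/
import Mathlib

section
/- Let N ≥ 1, 1 ≤ p < ∞, and κ, λ ≥ 0 with 0 < κ + λ < N, and set ρ := N/(κ+λ) > 1. Then there exists a constant C = C(N,p,κ,λ) > 0 such that every measurable function u : ℝ^N → ℝ satisfies ‖u‖_{L_M^{p,κ+λ}(ℝ^N;|y|^{−λ})} ≤ C ‖u‖_{L^{pρ}(ℝ^N;|y|^{−ρλ})}; in particular L^{pρ}(ℝ^N,|y|^{−ρλ}) is continuously embedded into the weighted Morrey space L_M^{p,κ+λ}(ℝ^N,|y|^{−λ}). -/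
open MeasureTheory Filter Topology ENNReal

noncomputable section

abbrev Euc (N : ℕ) : Type := EuclideanSpace ℝ (Fin N)

/-- Weighted Gagliardo seminorm raised to the power `p`. -/
def gagP (N : ℕ) (p s θ₁ θ₂ : ℝ) (u : Euc N → ℝ) : ℝ :=
  ∫ z : Euc N × Euc N,
    |u z.1 - u z.2| ^ p /
      (‖z.1‖ ^ θ₁ * ‖z.1 - z.2‖ ^ ((N : ℝ) + s * p) * ‖z.2‖ ^ θ₂)

/-- Weighted Lebesgue norm `‖u‖_{L^q(ℝ^N;|x|^{-lam})}`. -/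
def wLeb (N : ℕ) (q lam : ℝ) (u : Euc N → ℝ) : ℝ :=
  (∫ x : Euc N, |u x| ^ q / ‖x‖ ^ lam) ^ (1 / q)

/-- Critical Hardy–Sobolev exponent `p*_s(β,θ)`. -/
def pStar (N : ℕ) (p s θ β : ℝ) : ℝ := p * ((N : ℝ) - β) / ((N : ℝ) - s * p - θ)

/-- Stein–Weiss upper critical exponent `p♯_s(δ,θ,μ)`. -/
def pSharp (N : ℕ) (p s θ δ μ : ℝ) : ℝ :=
  p * ((N : ℝ) - δ - μ / 2) / ((N : ℝ) - s * p - θ)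

/-- Best fractional Hardy constant. -/
def hardyConst (N : ℕ) (p s θ₁ θ₂ : ℝ) : ℝ :=
  sInf { c : ℝ | ∃ u : Euc N → ℝ, ContDiff ℝ (⊤ : ℕ∞) u ∧ HasCompactSupport u ∧ u ≠ 0 ∧
    c = gagP N p s θ₁ θ₂ u / (wLeb N p (s * p + (θ₁ + θ₂)) u) ^ p }

/-- Membership in the homogeneous fractional Sobolev space `Ẇ^{s,p}_θ(ℝ^N)`. -/
def memSob (N : ℕ) (p s θ₁ θ₂ : ℝ) (u : Euc N → ℝ) : Prop :=
  MemLp u (ENNReal.ofReal (pStar N p s (θ₁ + θ₂) 0)) volume ∧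
  Integrable (fun z : Euc N × Euc N =>
    |u z.1 - u z.2| ^ p /
      (‖z.1‖ ^ θ₁ * ‖z.1 - z.2‖ ^ ((N : ℝ) + s * p) * ‖z.2‖ ^ θ₂)) volume

/-- `‖u‖^p = [u]^p - γ ‖u‖_{L^p(|x|^{-sp-θ})}^p`. -/
def sobNormP (N : ℕ) (p s θ₁ θ₂ γ : ℝ) (u : Euc N → ℝ) : ℝ :=
  gagP N p s θ₁ θ₂ u - γ * ∫ x : Euc N, |u x| ^ p / ‖x‖ ^ (s * p + (θ₁ + θ₂))

/-- `‖(u,v)‖^p` on the product space `W`. -/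
def WNormP (N : ℕ) (p s θ₁ θ₂ γ : ℝ) (u v : Euc N → ℝ) : ℝ :=
  sobNormP N p s θ₁ θ₂ γ u + sobNormP N p s θ₁ θ₂ γ v

/-- The quadratic Choquard form `Q♯`. -/
def Qsharp (N : ℕ) (psh δ μ : ℝ) (u v : Euc N → ℝ) : ℝ :=
  ∫ z : Euc N × Euc N,
    (|u z.1| ^ psh * |u z.2| ^ psh + |v z.1| ^ psh * |v z.2| ^ psh) /
      (‖z.1‖ ^ δ * ‖z.1 - z.2‖ ^ μ * ‖z.2‖ ^ δ)

/-- The form `Q*`. -/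
def QstarF (N : ℕ) (pst β η a b : ℝ) (u v : Euc N → ℝ) : ℝ :=
  ∫ x : Euc N, (|u x| ^ pst + |v x| ^ pst + η * |u x| ^ a * |v x| ^ b) / ‖x‖ ^ β

/-- Gagliardo pairing term of `⟨I'(u,v),(φ₁,φ₂)⟩`. -/
def gagPair (N : ℕ) (p s θ₁ θ₂ : ℝ) (u φ : Euc N → ℝ) : ℝ :=
  ∫ z : Euc N × Euc N,
    |u z.1 - u z.2| ^ (p - 2) * (u z.1 - u z.2) * (φ z.1 - φ z.2) /
      (‖z.1‖ ^ θ₁ * ‖z.1 - z.2‖ ^ ((N : ℝ) + s * p) * ‖z.2‖ ^ θ₂)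

/-- Hardy pairing term. -/
def hardyPair (N : ℕ) (p spθ : ℝ) (u φ : Euc N → ℝ) : ℝ :=
  ∫ x : Euc N, |u x| ^ (p - 2) * u x * φ x / ‖x‖ ^ spθ

/-- Choquard pairing term. -/
def choqPair (N : ℕ) (psh δ μ : ℝ) (u φ : Euc N → ℝ) : ℝ :=
  ∫ z : Euc N × Euc N,
    |u z.1| ^ (psh - 2) * u z.1 * |u z.2| ^ psh * φ z.1 /
      (‖z.1‖ ^ δ * ‖z.1 - z.2‖ ^ μ * ‖z.2‖ ^ δ)

/-- Hardy–Sobolev pairing term. -/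
def sobPair (N : ℕ) (pst β : ℝ) (u φ : Euc N → ℝ) : ℝ :=
  ∫ x : Euc N, |u x| ^ (pst - 2) * u x * φ x / ‖x‖ ^ β

/-- First coupling pairing term. -/
def couplPair1 (N : ℕ) (a b β : ℝ) (u v φ : Euc N → ℝ) : ℝ :=
  ∫ x : Euc N, |u x| ^ (a - 2) * u x * |v x| ^ b * φ x / ‖x‖ ^ β

/-- Second coupling pairing term. -/
def couplPair2 (N : ℕ) (a b β : ℝ) (u v φ : Euc N → ℝ) : ℝ :=
  ∫ x : Euc N, |u x| ^ a * |v x| ^ (b - 2) * v x * φ x / ‖x‖ ^ β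

/-- Weighted Morrey (quasi-)norm, valued in `ℝ≥0∞`. -/
def morreyE (N : ℕ) (q kl lam : ℝ) (u : Euc N → ℝ) : ℝ≥0∞ :=
  ⨆ (x : Euc N) (R : ℝ) (_ : 0 < R),
    (ENNReal.ofReal (R ^ (kl - (N : ℝ))) *
      ∫⁻ y in Metric.ball x R, ENNReal.ofReal (|u y| ^ q / ‖y‖ ^ lam)) ^ (1 / q)

/-- Weighted Lebesgue norm, valued in `ℝ≥0∞`. -/
def wLebE (N : ℕ) (q lam : ℝ) (u : Euc N → ℝ) : ℝ≥0∞ :=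
  (∫⁻ x : Euc N, ENNReal.ofReal (|u x| ^ q / ‖x‖ ^ lam)) ^ (1 / q)

/-- Embedding of the weighted Lebesgue space `L^{pρ}(ℝ^N,|y|^{-ρλ})` into the weighted
Morrey space `L_M^{p,κ+λ}(ℝ^N,|y|^{-λ})`, where `ρ = N/(κ+λ)`. -/
theorem lebesgue_into_morrey
    (N : ℕ) (hN : 1 ≤ N) (p κ lam : ℝ) (hp : 1 ≤ p)
    (hκ : 0 ≤ κ) (hlam : 0 ≤ lam) (hsum0 : 0 < κ + lam) (hsumN : κ + lam < N) :
    ∃ C : ℝ, 0 < C ∧ ∀ u : Euc N → ℝ, Measurable u →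
      morreyE N p (κ + lam) lam u ≤
        ENNReal.ofReal C *
          wLebE N (p * ((N : ℝ) / (κ + lam))) (((N : ℝ) / (κ + lam)) * lam) u := by
  haveI : Nonempty (Fin N) := Fin.pos_iff_nonempty.mp hN
  haveI : Nontrivial (Euc N) := inferInstance
  have hp0 : 0 < p := lt_of_lt_of_le one_pos hp
  set ρ : ℝ := (N : ℝ) / (κ + lam) with hρdef
  have hρ1 : 1 < ρ := (one_lt_div hsum0).2 hsumN
  have hpq : ρ.HolderConjugate (Real.conjExponent ρ) := Real.HolderConjugate.conjExponent hρ1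
  set q' : ℝ := Real.conjExponent ρ with hq'def
  set vB : ℝ≥0∞ := volume (Metric.ball (0 : Euc N) 1) with hvB
  have hvB_ne : vB ≠ ⊤ := measure_ball_lt_top.ne
  set e : ℝ := 1 / q' * (1 / p) with he
  have he0 : 0 ≤ e := mul_nonneg hpq.symm.one_div_nonneg (by positivity)
  have hvBe_ne : vB ^ e ≠ ⊤ := ENNReal.rpow_ne_top_of_nonneg he0 hvB_ne
  refine ⟨(vB ^ e).toReal + 1, by positivity, ?_⟩
  intro u hu
  rw [morreyE]
  refine iSup_le fun x => iSup_le fun R => iSup_le fun hR => ?_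
  set f : Euc N → ℝ≥0∞ := fun y => ENNReal.ofReal (|u y| ^ p / ‖y‖ ^ lam) with hf
  set I : ℝ≥0∞ := ∫⁻ y : Euc N, ENNReal.ofReal (|u y| ^ (p * ρ) / ‖y‖ ^ (ρ * lam)) with hI
  have hmf : Measurable f := by
    apply Measurable.ennreal_ofReal
    exact (hu.abs.pow measurable_const).div (measurable_norm.pow measurable_const)
  -- Hölder
  have holder : ∫⁻ y in Metric.ball x R, f y ≤ I ^ (1 / ρ) * (volume (Metric.ball x R)) ^ (1 / q') := by
    have h1 : ∫⁻ y in Metric.ball x R, f y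
        = ∫⁻ y, f y * (Metric.ball x R).indicator (1 : Euc N → ℝ≥0∞) y := by
      rw [← lintegral_indicator measurableSet_ball]
      congr 1; ext y
      by_cases h : y ∈ Metric.ball x R <;> simp [h]
    rw [h1]
    have H := ENNReal.lintegral_mul_le_Lp_mul_Lq volume hpq hmf.aemeasurable
      (f := f) (g := (Metric.ball x R).indicator (1 : Euc N → ℝ≥0∞))
      ((measurable_one.indicator measurableSet_ball).aemeasurable)
    simp only [Pi.mul_apply] at H
    refine H.trans (le_of_eq ?_)
    congr 1
    · congr 1
      refine lintegral_congr fun y => ?_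
      show ENNReal.ofReal (|u y| ^ p / ‖y‖ ^ lam) ^ ρ
          = ENNReal.ofReal (|u y| ^ (p * ρ) / ‖y‖ ^ (ρ * lam))
      rw [ENNReal.ofReal_rpow_of_nonneg (by positivity) hpq.nonneg]
      congr 1
      rw [Real.div_rpow (by positivity) (by positivity),
        ← Real.rpow_mul (abs_nonneg _), ← Real.rpow_mul (norm_nonneg _), mul_comm lam ρ]
    · congr 1
      have : ∀ y : Euc N, (Metric.ball x R).indicator (1 : Euc N → ℝ≥0∞) y ^ q'
          = (Metric.ball x R).indicator 1 y := by
        intro y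
        by_cases h : y ∈ Metric.ball x R <;>
          simp [h, ENNReal.zero_rpow_of_pos hpq.symm.pos]
      rw [lintegral_congr this, lintegral_indicator_one measurableSet_ball]
  -- volume of ball
  have hvol : volume (Metric.ball x R) = ENNReal.ofReal (R ^ ((N : ℝ))) * vB := by
    rw [Measure.addHaar_ball volume x hR.le, finrank_euclideanSpace_fin,
      Real.rpow_natCast]
  have hNne : ((N : ℝ)) ≠ 0 := by positivity
  have hq'inv : (N : ℝ) * (1 / q') = (N : ℝ) - (κ + lam) := by
    have h1 : 1 / q' = 1 - 1 / ρ := by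
      have h2 := hpq.inv_add_inv_eq_one
      rw [one_div, one_div]; linarith
    have h3 : 1 / ρ = (κ + lam) / (N : ℝ) := by
      rw [hρdef, one_div_div]
    rw [h1, h3]
    field_simp
  have key : ENNReal.ofReal (R ^ (κ + lam - (N : ℝ))) * ∫⁻ y in Metric.ball x R, f y
      ≤ I ^ (1 / ρ) * vB ^ (1 / q') := by
    calc ENNReal.ofReal (R ^ (κ + lam - (N : ℝ))) * ∫⁻ y in Metric.ball x R, f y
        ≤ ENNReal.ofReal (R ^ (κ + lam - (N : ℝ))) *
            (I ^ (1 / ρ) * (volume (Metric.ball x R)) ^ (1 / q')) :=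
          mul_le_mul_right holder _
      _ = (ENNReal.ofReal (R ^ (κ + lam - (N : ℝ))) *
            (ENNReal.ofReal (R ^ ((N : ℝ)))) ^ (1 / q')) * (I ^ (1 / ρ) * vB ^ (1 / q')) := by
          rw [hvol, ENNReal.mul_rpow_of_nonneg _ _ hpq.symm.one_div_nonneg]; ring
      _ = I ^ (1 / ρ) * vB ^ (1 / q') := by
          rw [ENNReal.ofReal_rpow_of_pos (Real.rpow_pos_of_pos hR _),
            ← Real.rpow_mul hR.le, hq'inv,
            ← ENNReal.ofReal_mul (by positivity), ← Real.rpow_add hR]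
          norm_num
  calc (ENNReal.ofReal (R ^ (κ + lam - (N : ℝ))) * ∫⁻ y in Metric.ball x R, f y) ^ (1 / p)
      ≤ (I ^ (1 / ρ) * vB ^ (1 / q')) ^ (1 / p) :=
        ENNReal.rpow_le_rpow key (by positivity)
    _ = I ^ (1 / (p * ρ)) * vB ^ e := by
        rw [ENNReal.mul_rpow_of_nonneg _ _ (by positivity), ← ENNReal.rpow_mul,
          ← ENNReal.rpow_mul, he]
        congr 1
        rw [div_mul_div_comm, one_mul, mul_comm ρ p]
    _ ≤ ENNReal.ofReal ((vB ^ e).toReal + 1) *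
          wLebE N (p * ((N : ℝ) / (κ + lam))) (((N : ℝ) / (κ + lam)) * lam) u := by
        rw [mul_comm]
        refine mul_le_mul' ?_ (le_of_eq rfl)
        calc vB ^ e = ENNReal.ofReal ((vB ^ e).toReal) := (ENNReal.ofReal_toReal hvBe_ne).symm
          _ ≤ ENNReal.ofReal ((vB ^ e).toReal + 1) := ENNReal.ofReal_le_ofReal (by linarith)

end
end

section
/- Let N ≥ 1, 1 < p < ∞, and κ, λ ≥ 0 with 0 < κ + λ < N. Then there exists a constant C = C(N,p,κ,λ) > 0 such that every measurable function u : ℝ^N → ℝ satisfies ‖u‖_{L_M^{1,(κ+λ)/p}(ℝ^N;|y|^{−λ/p})} ≤ C ‖u‖_{L_M^{p,κ+λ}(ℝ^N;|y|^{−λ})}; in particular L_M^{p,κ+λ}(ℝ^N,|y|^{−λ}) is continuously embedded into L_M^{1,(κ+λ)/p}(ℝ^N,|y|^{−λ/p}). -/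
open MeasureTheory Filter Topology ENNReal

noncomputable section

/-- Embedding of the weighted Morrey space `L_M^{p,κ+λ}(ℝ^N,|y|^{-λ})` into
`L_M^{1,(κ+λ)/p}(ℝ^N,|y|^{-λ/p})`. -/
theorem morrey_into_morrey_one
    (N : ℕ) (hN : 1 ≤ N) (p κ lam : ℝ) (hp : 1 < p)
    (hκ : 0 ≤ κ) (hlam : 0 ≤ lam) (hsum0 : 0 < κ + lam) (hsumN : κ + lam < N) :
    ∃ C : ℝ, 0 < C ∧ ∀ u : Euc N → ℝ, Measurable u →
      morreyE N 1 ((κ + lam) / p) (lam / p) u ≤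
        ENNReal.ofReal C * morreyE N p (κ + lam) lam u := by
  haveI : Nontrivial (Euc N) := Module.nontrivial_of_finrank_pos (R := ℝ)
    (by rw [finrank_euclideanSpace_fin]; omega)
  set c : ℝ≥0∞ := volume (Metric.ball (0 : Euc N) 1) with hc
  have hc0 : c ≠ 0 := (Metric.measure_ball_pos _ _ one_pos).ne'
  have hctop : c ≠ ⊤ := (measure_ball_lt_top).ne
  have hppos : 0 < p := lt_trans one_pos hp
  have h1m : (0:ℝ) ≤ 1 - 1/p := by
    have : 1/p < 1 := by rw [div_lt_one hppos]; exact hp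
    linarith
  have hcr : (0:ℝ) < c.toReal := ENNReal.toReal_pos hc0 hctop
  refine ⟨c.toReal ^ (1 - 1/p), Real.rpow_pos_of_pos hcr _, fun u hu => ?_⟩
  have hofC : ENNReal.ofReal (c.toReal ^ (1 - 1/p)) = c ^ (1 - 1/p) := by
    rw [← ENNReal.ofReal_rpow_of_pos hcr, ENNReal.ofReal_toReal hctop]
  rw [hofC]
  set M := morreyE N p (κ + lam) lam u with hM
  rw [morreyE]
  refine iSup_le fun x => iSup_le fun R => iSup_le fun hR => ?_
  rw [show (1:ℝ)/1 = 1 by norm_num, ENNReal.rpow_one]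
  simp only [Real.rpow_one]
  have e_mul : ∀ a b : ℝ, ENNReal.ofReal (R^a) * ENNReal.ofReal (R^b)
      = ENNReal.ofReal (R^(a+b)) := fun a b => by
    rw [← ENNReal.ofReal_mul (Real.rpow_nonneg hR.le a), ← Real.rpow_add hR]
  have e_rpow : ∀ a t : ℝ, (ENNReal.ofReal (R^a)) ^ t = ENNReal.ofReal (R^(a*t)) := fun a t => by
    rw [ENNReal.ofReal_rpow_of_pos (Real.rpow_pos_of_pos hR a), ← Real.rpow_mul hR.le]
  set μ := volume.restrict (Metric.ball x R) with hμ
  set f : Euc N → ℝ≥0∞ := fun y => ENNReal.ofReal (|u y| / ‖y‖ ^ (lam / p)) with hf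
  have hfm : AEMeasurable f μ := by
    apply Measurable.aemeasurable
    apply Measurable.ennreal_ofReal
    apply hu.abs.div
    measurability
  have hpq : p.HolderConjugate (p / (p - 1)) := Real.HolderConjugate.conjExponent hp
  have hqinv : 1 / (p / (p - 1)) = 1 - 1/p := by
    rw [one_div_div]; field_simp
  set I : ℝ≥0∞ := ∫⁻ y, ENNReal.ofReal (|u y| ^ p / ‖y‖ ^ lam) ∂μ with hI
  have hfp : ∀ y : Euc N, f y ^ p = ENNReal.ofReal (|u y| ^ p / ‖y‖ ^ lam) := by
    intro y
    rw [hf, ENNReal.ofReal_rpow_of_nonneg (by positivity) hppos.le,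
      Real.div_rpow (abs_nonneg _) (Real.rpow_nonneg (norm_nonneg _) _),
      ← Real.rpow_mul (norm_nonneg _), div_mul_cancel₀ _ hppos.ne']
  have holder : (∫⁻ y, f y ∂μ) ≤ I ^ (1/p) * (μ Set.univ) ^ (1 - 1/p) := by
    have h := ENNReal.lintegral_mul_le_Lp_mul_Lq μ hpq hfm aemeasurable_const (g := fun _ => 1)
    simp only [Pi.mul_apply, mul_one, ENNReal.one_rpow, lintegral_const, one_mul] at h
    calc (∫⁻ y, f y ∂μ) ≤ (∫⁻ y, f y ^ p ∂μ) ^ (1/p) * (μ Set.univ) ^ (1/(p/(p-1))) := h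
    _ = I ^ (1/p) * (μ Set.univ) ^ (1 - 1/p) := by
        rw [hqinv, hI]
        congr 2
        exact lintegral_congr fun y => hfp y
  have h1 : (ENNReal.ofReal (R ^ (κ + lam - (N:ℝ))) * I) ^ (1/p) ≤ M := by
    rw [hM, morreyE]
    exact le_iSup_of_le x (le_iSup_of_le R (le_iSup_of_le hR le_rfl))
  have h1' : ENNReal.ofReal (R ^ (κ + lam - (N:ℝ))) * I ≤ M ^ p := by
    have h2 := ENNReal.rpow_le_rpow h1 hppos.le
    rwa [← ENNReal.rpow_mul, one_div_mul_cancel hppos.ne', ENNReal.rpow_one] at h2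
  have hIle : I ≤ ENNReal.ofReal (R ^ ((N:ℝ) - (κ + lam))) * M ^ p := by
    calc I = ENNReal.ofReal (R ^ ((N:ℝ) - (κ + lam)))
          * (ENNReal.ofReal (R ^ (κ + lam - (N:ℝ))) * I) := by
          rw [← mul_assoc, e_mul, show ((N:ℝ) - (κ+lam)) + (κ+lam - (N:ℝ)) = 0 by ring,
            Real.rpow_zero, ENNReal.ofReal_one, one_mul]
    _ ≤ _ := mul_le_mul_right h1' _
  have hvol : μ Set.univ = ENNReal.ofReal (R ^ (N:ℝ)) * c := by
    rw [hμ, Measure.restrict_apply_univ, Measure.addHaar_ball volume x hR.le,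
      finrank_euclideanSpace_fin, ← Real.rpow_natCast, hc]
  have h3 : I ^ (1/p) ≤ ENNReal.ofReal (R ^ (((N:ℝ) - (κ+lam)) * (1/p))) * M := by
    calc I ^ (1/p) ≤ (ENNReal.ofReal (R ^ ((N:ℝ) - (κ + lam))) * M ^ p) ^ (1/p) :=
        ENNReal.rpow_le_rpow hIle (by positivity)
    _ = _ := by
        rw [ENNReal.mul_rpow_of_nonneg _ _ (by positivity), e_rpow, ← ENNReal.rpow_mul,
          mul_one_div_cancel hppos.ne', ENNReal.rpow_one]
  have h4 : (μ Set.univ) ^ (1 - 1/p)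
      = ENNReal.ofReal (R ^ ((N:ℝ) * (1 - 1/p))) * c ^ (1 - 1/p) := by
    rw [hvol, ENNReal.mul_rpow_of_nonneg _ _ h1m, e_rpow]
  calc ENNReal.ofReal (R ^ ((κ + lam)/p - (N:ℝ))) * ∫⁻ y, f y ∂μ
      ≤ ENNReal.ofReal (R ^ ((κ + lam)/p - (N:ℝ)))
        * (I ^ (1/p) * (μ Set.univ) ^ (1 - 1/p)) := mul_le_mul_right holder _
    _ ≤ ENNReal.ofReal (R ^ ((κ + lam)/p - (N:ℝ)))
        * ((ENNReal.ofReal (R ^ (((N:ℝ) - (κ+lam)) * (1/p))) * M)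
          * (ENNReal.ofReal (R ^ ((N:ℝ) * (1 - 1/p))) * c ^ (1 - 1/p))) := by
        rw [h4]; exact mul_le_mul_right (mul_le_mul_left h3 _) _
    _ = (ENNReal.ofReal (R ^ ((κ + lam)/p - (N:ℝ)))
        * (ENNReal.ofReal (R ^ (((N:ℝ) - (κ+lam)) * (1/p)))
          * ENNReal.ofReal (R ^ ((N:ℝ) * (1 - 1/p))))) * (c ^ (1 - 1/p) * M) := by ring
    _ = c ^ (1 - 1/p) * M := by
        rw [e_mul, e_mul, show ((κ + lam)/p - (N:ℝ))
          + (((N:ℝ) - (κ+lam)) * (1/p) + (N:ℝ) * (1 - 1/p)) = 0 by field_simp; ring,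
          Real.rpow_zero, ENNReal.ofReal_one, one_mul]

end
end

section
/- Let N ≥ 1, 0 < s < 1, 1 < p < ∞, θ ≥ 0 with sp + θ < N, and 0 < α < sp + θ. Set r := α/p*_s(α,θ). Then for every 1 ≤ q < p*_s(α,θ) there exists a constant C > 0 such that every measurable function u : ℝ^N → ℝ satisfies ‖u‖_{L_M^{q,(N−sp−θ)q/p + qr}(ℝ^N;|y|^{−qr})} ≤ C ‖u‖_{L^{p*_s(α,θ)}(ℝ^N;|y|^{−α})}; in particular the weighted Lebesgue space L^{p*_s(α,θ)}(ℝ^N,|y|^{−α}) is continuously embedded into the weighted Morrey space L_M^{q,(N−sp−θ)q/p + qr}(ℝ^N,|y|^{−qr}). -/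
open MeasureTheory Filter Topology ENNReal

noncomputable section

/-- The weighted Lebesgue space `L^{p*_s(α,θ)}(ℝ^N,|y|^{-α})` embeds continuously into the
weighted Morrey space `L_M^{q,(N-sp-θ)q/p + qr}(ℝ^N,|y|^{-qr})`, where `r = α/p*_s(α,θ)`. -/
theorem lebesgue_into_morrey_critical
    (N : ℕ) (hN : 1 ≤ N) (s p θ α : ℝ)
    (hs0 : 0 < s) (hs1 : s < 1) (hp : 1 < p)
    (hθ : 0 ≤ θ) (hspθ : s * p + θ < N)
    (hα0 : 0 < α) (hα : α < s * p + θ) :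
    ∀ q : ℝ, 1 ≤ q → q < pStar N p s θ α →
      ∃ C : ℝ, 0 < C ∧ ∀ u : Euc N → ℝ, Measurable u →
        morreyE N q
            (((N : ℝ) - s * p - θ) * q / p + q * (α / pStar N p s θ α))
            (q * (α / pStar N p s θ α)) u ≤
          ENNReal.ofReal C * wLebE N (pStar N p s θ α) α u := by
  intro q hq1 hqP
  have hN0 : (0:ℝ) < N := by exact_mod_cast Nat.lt_of_lt_of_le Nat.zero_lt_one hN
  have hp0 : (0:ℝ) < p := lt_trans one_pos hp
  have hNsp : (0:ℝ) < (N:ℝ) - s * p - θ := by linarith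
  have hNα : (0:ℝ) < (N:ℝ) - α := by linarith
  set P := pStar N p s θ α with hPdef
  have hP0 : 0 < P := by rw [hPdef, pStar]; positivity
  have hq0 : (0:ℝ) < q := lt_of_lt_of_le one_pos hq1
  have hPmul : P * ((N:ℝ) - s * p - θ) = p * ((N:ℝ) - α) := by
    rw [hPdef, pStar]; field_simp
    exact div_self (ne_of_gt (by linarith))
  have ht0 : 0 < 1 - q / P := by
    have : q / P < 1 := (div_lt_one hP0).2 hqP
    linarith
  set t : ℝ := 1 - q / P with htdef
  have haux : ((N:ℝ) - s * p - θ) * q / p = q * ((N:ℝ) - α) / P := by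
    rw [div_eq_div_iff hp0.ne' hP0.ne']
    linear_combination q * hPmul
  have hklN : (((N:ℝ) - s * p - θ) * q / p + q * (α / P)) - (N:ℝ) + (N:ℝ) * t = 0 := by
    rw [htdef, haux]
    field_simp
    ring
  haveI : Nontrivial (Euc N) := by
    apply Module.nontrivial_of_finrank_pos (R := ℝ)
    rw [finrank_euclideanSpace_fin]
    exact hN
  set B : ℝ≥0∞ := volume (Metric.ball (0 : Euc N) 1) with hBdef
  have hB0 : 0 < B := by rw [hBdef]; exact Metric.measure_ball_pos volume 0 one_pos
  have hBtop : B ≠ ⊤ := by rw [hBdef]; exact measure_ball_lt_top.ne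
  have hBt0 : 0 < B.toReal := ENNReal.toReal_pos hB0.ne' hBtop
  refine ⟨B.toReal ^ (t / q), by positivity, ?_⟩
  intro u hu
  set F : Euc N → ℝ≥0∞ := fun y => ENNReal.ofReal (|u y| ^ P / ‖y‖ ^ α) with hFdef
  set I : ℝ≥0∞ := ∫⁻ x : Euc N, F x with hIdef
  have hFmeas : Measurable F := by
    rw [hFdef]
    exact ((hu.abs.pow measurable_const).div (measurable_norm.pow measurable_const)).ennreal_ofReal
  have hwleb : wLebE N P α u = I ^ (1 / P) := by
    rw [wLebE, hIdef, hFdef]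
  have hCeq : ENNReal.ofReal (B.toReal ^ (t / q)) = B ^ (t / q) := by
    rw [← ENNReal.ofReal_rpow_of_nonneg ENNReal.toReal_nonneg (by positivity),
      ENNReal.ofReal_toReal hBtop]
  have hpt : ∀ y : Euc N,
      ENNReal.ofReal (|u y| ^ q / ‖y‖ ^ (q * (α / P))) = F y ^ (q / P) := by
    intro y
    rw [hFdef]
    rw [ENNReal.ofReal_rpow_of_nonneg (by positivity) (by positivity)]
    congr 1
    rw [Real.div_rpow (by positivity) (by positivity), ← Real.rpow_mul (abs_nonneg _),
      ← Real.rpow_mul (norm_nonneg _), show P * (q / P) = q by field_simp,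
      show α * (q / P) = q * (α / P) by ring]
  rw [morreyE]
  refine iSup_le fun x => iSup_le fun R => iSup_le fun hR => ?_
  have hvol : volume (Metric.ball x R) = ENNReal.ofReal (R ^ ((N : ℕ) : ℝ)) * B := by
    rw [hBdef, MeasureTheory.Measure.addHaar_ball volume x hR.le, finrank_euclideanSpace_fin,
      Real.rpow_natCast]
  have hhold : (∫⁻ y in Metric.ball x R, F y ^ (q / P)) ≤
      I ^ (q / P) * (ENNReal.ofReal (R ^ ((N : ℕ) : ℝ)) * B) ^ t := by
    have h1 : (1:ℝ) < P / q := (one_lt_div hq0).2 hqP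
    have hconj := Real.HolderConjugate.conjExponent h1
    have hcalc := ENNReal.lintegral_mul_le_Lp_mul_Lq (volume.restrict (Metric.ball x R)) hconj
      (f := fun y => F y ^ (q / P)) (g := fun _ => 1)
      ((hFmeas.pow measurable_const).aemeasurable) aemeasurable_const
    have e1 : ∀ y : Euc N, (F y ^ (q / P)) ^ (P / q) = F y := by
      intro y
      rw [← ENNReal.rpow_mul, div_mul_div_comm,
        div_eq_one_iff_eq (by positivity : P * q ≠ 0) |>.2 (by ring), ENNReal.rpow_one]
    simp only [Pi.mul_apply, mul_one, e1, ENNReal.one_rpow, lintegral_one,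
      Measure.restrict_apply_univ] at hcalc
    have hconj' : 1 / Real.conjExponent (P / q) = t := by
      rw [Real.conjExponent, one_div_div, htdef]
      field_simp
    rw [one_div_div, hconj', hvol] at hcalc
    refine le_trans hcalc ?_
    exact mul_le_mul_left (ENNReal.rpow_le_rpow (setLIntegral_le_lintegral _ _)
      (by positivity)) _
  calc (ENNReal.ofReal (R ^ ((((N:ℝ) - s * p - θ) * q / p + q * (α / P)) - (N:ℝ))) *
        ∫⁻ y in Metric.ball x R, ENNReal.ofReal (|u y| ^ q / ‖y‖ ^ (q * (α / P)))) ^ (1 / q)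
      ≤ (ENNReal.ofReal (R ^ ((((N:ℝ) - s * p - θ) * q / p + q * (α / P)) - (N:ℝ))) *
        (I ^ (q / P) * (ENNReal.ofReal (R ^ ((N : ℕ) : ℝ)) * B) ^ t)) ^ (1 / q) := by
        apply ENNReal.rpow_le_rpow _ (by positivity)
        refine mul_le_mul_right ?_ _
        rw [show (fun y => ENNReal.ofReal (|u y| ^ q / ‖y‖ ^ (q * (α / P)))) =
          fun y => F y ^ (q / P) from funext hpt]
        exact hhold
    _ = (I ^ (q / P) * B ^ t) ^ (1 / q) := by
        congr 1
        rw [ENNReal.mul_rpow_of_nonneg _ _ ht0.le,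
          show ENNReal.ofReal (R ^ ((((N:ℝ) - s * p - θ) * q / p + q * (α / P)) - (N:ℝ))) *
            (I ^ (q / P) * (ENNReal.ofReal (R ^ ((N : ℕ) : ℝ)) ^ t * B ^ t)) =
            (ENNReal.ofReal (R ^ ((((N:ℝ) - s * p - θ) * q / p + q * (α / P)) - (N:ℝ))) *
              ENNReal.ofReal (R ^ ((N : ℕ) : ℝ)) ^ t) * (I ^ (q / P) * B ^ t) by ring,
          ENNReal.ofReal_rpow_of_nonneg (Real.rpow_nonneg hR.le _) ht0.le,
          ← ENNReal.ofReal_mul (Real.rpow_nonneg hR.le _),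
          ← Real.rpow_mul hR.le, ← Real.rpow_add hR,
          show ((((N:ℝ) - s * p - θ) * q / p + q * (α / P)) - (N:ℝ)) + ((N : ℕ) : ℝ) * t = 0 by
            linarith [hklN],
          Real.rpow_zero, ENNReal.ofReal_one, one_mul]
    _ = ENNReal.ofReal (B.toReal ^ (t / q)) * wLebE N P α u := by
        rw [hCeq, hwleb, ENNReal.mul_rpow_of_nonneg _ _ (by positivity : (0:ℝ) ≤ 1 / q),
          ← ENNReal.rpow_mul, ← ENNReal.rpow_mul,
          show (q / P) * (1 / q) = 1 / P by
            rw [div_mul_div_comm, mul_one, mul_comm P q, ← div_div, div_self hq0.ne'],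
          show t * (1 / q) = t / q by rw [mul_one_div],
          mul_comm]

end
end

section
/- Let N ≥ 1, 0 < s < 1, 1 < p < ∞, θ = θ₁ + θ₂ with 0 ≤ θ and sp + θ < N, 0 < μ < N, 0 < δ < sp + θ with 2δ + μ < N, 0 < β < sp + θ, η > 0, a, b > 0 with a + b = p*_s(β,θ), and γ < γ_H. Let {(u_k,v_k)} ⊂ W be a sequence and c ∈ ℝ such that I(u_k,v_k) → c and ⟨I'(u_k,v_k),(u_k,v_k)⟩/(1 + ‖(u_k,v_k)‖) → 0 as k → ∞ (in particular, any Palais–Smale sequence for I at level c). Then {(u_k,v_k)} is bounded in W, i.e. sup_k ‖(u_k,v_k)‖ < ∞. -/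
open MeasureTheory Filter Topology ENNReal

noncomputable section

/-- Energy functional I associated with the doubly critical system. -/
def energyI (N : ℕ) (p s θ₁ θ₂ γ δ μ β η a b : ℝ) (u v : Euc N → ℝ) : ℝ :=
  (1 / p) * WNormP N p s θ₁ θ₂ γ u v
    - (1 / (2 * pSharp N p s (θ₁ + θ₂) δ μ)) *
        Qsharp N (pSharp N p s (θ₁ + θ₂) δ μ) δ μ u v
    - (1 / pStar N p s (θ₁ + θ₂) β) * QstarF N (pStar N p s (θ₁ + θ₂) β) β η a b u v


/-- Abstract boundedness lemma for Palais–Smale type sequences. -/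
lemma aux_ps_bound (p P S c : ℝ) (T A B : ℕ → ℝ)
    (hp : 1 < p) (hpP : p < P) (hPpos : 0 < P) (hSpos : 0 < S) (hPS : P ≤ 2 * S)
    (hA : ∀ k, 0 ≤ A k) (hB : ∀ k, 0 ≤ B k)
    (hI : Tendsto (fun k => (1 / p) * T k - (1 / (2 * S)) * A k - (1 / P) * B k)
      atTop (𝓝 c))
    (hI' : Tendsto (fun k => (T k - A k - B k) / (1 + T k ^ (1 / p))) atTop (𝓝 0)) :
    ∃ M : ℝ, ∀ k, T k ^ (1 / p) ≤ M := by
  have hp0 : (0:ℝ) < p := by linarith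
  obtain ⟨κ, hκdef⟩ : ∃ x : ℝ, x = 1 / p - 1 / P := ⟨_, rfl⟩
  have hκ : 0 < κ := by
    have := one_div_lt_one_div_of_lt hp0 hpP
    rw [hκdef]; linarith
  have hPs2 : 1 / (2 * S) ≤ 1 / P := one_div_le_one_div_of_le hPpos hPS
  have hinvp : 1 / p ≤ 1 := by rw [div_le_one hp0]; linarith
  have hinvp0 : (0:ℝ) ≤ 1 / p := by positivity
  obtain ⟨ε, hεdef⟩ : ∃ x : ℝ, x = κ * P / 2 := ⟨_, rfl⟩
  have hε : 0 < ε := by rw [hεdef]; positivity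
  obtain ⟨K₁, hK₁⟩ := Metric.tendsto_atTop.mp hI 1 one_pos
  obtain ⟨K₂, hK₂⟩ := Metric.tendsto_atTop.mp hI' ε hε
  obtain ⟨M₁, hM₁def⟩ : ∃ x : ℝ, x = max 1 |p * (c - 1)| := ⟨_, rfl⟩
  obtain ⟨M₂, hM₂def⟩ : ∃ x : ℝ, x = ((c + 1) + κ / 2) / (κ / 2) := ⟨_, rfl⟩
  set K := max K₁ K₂ with hKdef
  have key : ∀ k, K ≤ k → T k ^ (1 / p) ≤ max M₁ M₂ := by
    intro k hk
    have h1 : |(1 / p) * T k - (1 / (2 * S)) * A k - (1 / P) * B k - c| < 1 := by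
      have := hK₁ k (le_trans (le_max_left _ _) hk)
      rwa [Real.dist_eq] at this
    have h2 : |(T k - A k - B k) / (1 + T k ^ (1 / p))| < ε := by
      have := hK₂ k (le_trans (le_max_right _ _) hk)
      rwa [Real.dist_eq, sub_zero] at this
    rw [abs_sub_lt_iff] at h1
    have hAk := hA k; have hBk := hB k
    have hcA : 0 ≤ (1 / (2 * S)) * A k := by positivity
    have hcB : 0 ≤ (1 / P) * B k := by positivity
    have hlow : p * (c - 1) ≤ T k := by
      have h3 : c - 1 ≤ (1 / p) * T k := by linarith [h1.2]
      calc p * (c - 1) ≤ p * ((1 / p) * T k) :=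
            mul_le_mul_of_nonneg_left h3 hp0.le
        _ = T k := by field_simp
    rcases le_or_gt (T k) 1 with hT1 | hT1
    · have habs : |T k| ≤ M₁ := by
        rw [abs_le]; constructor
        · have h4 : -|p * (c - 1)| ≤ p * (c - 1) := neg_abs_le _
          have h5 : |p * (c - 1)| ≤ M₁ := hM₁def ▸ le_max_right _ _
          linarith
        · exact le_trans hT1 (hM₁def ▸ le_max_left _ _)
      have e1 : T k ^ (1 / p) ≤ |T k ^ (1 / p)| := le_abs_self _
      have e2 : |T k ^ (1 / p)| ≤ |T k| ^ (1 / p) := Real.abs_rpow_le_abs_rpow _ _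
      have e3 : |T k| ^ (1 / p) ≤ M₁ ^ (1 / p) :=
        Real.rpow_le_rpow (abs_nonneg _) habs hinvp0
      have e4 : M₁ ^ (1 / p) ≤ M₁ := by
        calc M₁ ^ (1 / p) ≤ M₁ ^ (1:ℝ) :=
              Real.rpow_le_rpow_of_exponent_le (hM₁def ▸ le_max_left _ _) hinvp
          _ = M₁ := Real.rpow_one _
      exact le_trans e1 (le_trans e2 (le_trans e3 (le_trans e4 (le_max_left _ _))))
    · have hT0 : (0:ℝ) < T k := by linarith
      have hfT : T k ^ (1 / p) ≤ T k := by
        calc T k ^ (1 / p) ≤ T k ^ (1:ℝ) :=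
              Real.rpow_le_rpow_of_exponent_le hT1.le hinvp
          _ = T k := Real.rpow_one _
      have hfpos : (0:ℝ) < T k ^ (1 / p) := Real.rpow_pos_of_pos hT0 _
      have hDabs : |T k - A k - B k| ≤ ε * (1 + T k ^ (1 / p)) := by
        rw [abs_div, abs_of_pos (by positivity : (0:ℝ) < 1 + T k ^ (1 / p))] at h2
        have := (div_lt_iff₀ (by positivity : (0:ℝ) < 1 + T k ^ (1 / p))).mp h2
        linarith
      have hkey : κ * T k ≤ ((1 / p) * T k - (1 / (2 * S)) * A k - (1 / P) * B k)
          - (1 / P) * (T k - A k - B k) := by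
        have hcoef : 0 ≤ (1 / P - 1 / (2 * S)) * A k := mul_nonneg (by linarith) hAk
        rw [hκdef]; nlinarith [hcoef]
      have hIub : (1 / p) * T k - (1 / (2 * S)) * A k - (1 / P) * B k ≤ c + 1 := by
        linarith [h1.1]
      have hDub : -((1 / P) * (T k - A k - B k)) ≤ (1 / P) * (ε * (1 + T k ^ (1 / p))) := by
        have h5 : -(T k - A k - B k) ≤ |T k - A k - B k| := neg_le_abs _
        have h6 := mul_le_mul_of_nonneg_left (le_trans h5 hDabs)
          (by positivity : (0:ℝ) ≤ 1 / P)
        nlinarith [h6]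
      have hεP : (1 / P) * ε = κ / 2 := by
        rw [hεdef]; field_simp
      have e5 : (1 / P) * (ε * (1 + T k ^ (1 / p))) = (κ / 2) * (1 + T k ^ (1 / p)) := by
        rw [← mul_assoc, hεP]
      have e6 : (κ / 2) * (1 + T k ^ (1 / p)) ≤ (κ / 2) * (1 + T k) :=
        mul_le_mul_of_nonneg_left (by linarith) (half_pos hκ).le
      have hmain : κ * T k ≤ (c + 1) + (κ / 2) * (1 + T k) := by
        linarith [hkey, hIub, hDub, e5, e6]
      have hTM2 : T k ≤ M₂ := by
        rw [hM₂def, le_div_iff₀ (half_pos hκ)]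
        linarith [hmain]
      exact le_trans hfT (le_trans hTM2 (le_max_right _ _))
  refine ⟨max 0 (max M₁ M₂) + ∑ i ∈ Finset.range K, |T i ^ (1 / p)|, fun k => ?_⟩
  have hsum : (0:ℝ) ≤ ∑ i ∈ Finset.range K, |T i ^ (1 / p)| :=
    Finset.sum_nonneg fun i _ => abs_nonneg _
  have h0 : (0:ℝ) ≤ max 0 (max M₁ M₂) := le_max_left _ _
  rcases le_or_gt K k with hk | hk
  · have := key k hk
    have h7 : max M₁ M₂ ≤ max 0 (max M₁ M₂) := le_max_right _ _
    linarith
  · have hmem : k ∈ Finset.range K := Finset.mem_range.mpr hk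
    have h8 := Finset.single_le_sum (f := fun i => |T i ^ (1 / p)|)
      (fun i _ => abs_nonneg _) hmem
    have h9 : T k ^ (1 / p) ≤ |T k ^ (1 / p)| := le_abs_self _
    linarith

/-- Any Palais–Smale-type sequence for the energy functional is bounded in W. -/
theorem palais_smale_bounded
    (N : ℕ) (hN : 1 ≤ N) (s p θ₁ θ₂ μ δ β η a b γ : ℝ)
    (hs0 : 0 < s) (hs1 : s < 1) (hp : 1 < p)
    (hθ : 0 ≤ θ₁ + θ₂) (hspθ : s * p + (θ₁ + θ₂) < N)
    (hμ0 : 0 < μ) (hμN : μ < N)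
    (hδ0 : 0 < δ) (hδ : δ < s * p + (θ₁ + θ₂)) (hδμ : 2 * δ + μ < N)
    (hβ0 : 0 < β) (hβ : β < s * p + (θ₁ + θ₂))
    (hη : 0 < η) (ha : 0 < a) (hb : 0 < b)
    (hab : a + b = pStar N p s (θ₁ + θ₂) β)
    (hγ : γ < hardyConst N p s θ₁ θ₂)
    (c : ℝ) (u v : ℕ → Euc N → ℝ)
    (hmemu : ∀ k, memSob N p s θ₁ θ₂ (u k)) (hmemv : ∀ k, memSob N p s θ₁ θ₂ (v k))
    (hI : Tendsto (fun k => energyI N p s θ₁ θ₂ γ δ μ β η a b (u k) (v k)) atTop (𝓝 c))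
    (hI' : Tendsto (fun k =>
        (WNormP N p s θ₁ θ₂ γ (u k) (v k)
          - Qsharp N (pSharp N p s (θ₁ + θ₂) δ μ) δ μ (u k) (v k)
          - QstarF N (pStar N p s (θ₁ + θ₂) β) β η a b (u k) (v k)) /
        (1 + WNormP N p s θ₁ θ₂ γ (u k) (v k) ^ (1 / p))) atTop (𝓝 0)) :
    ∃ M : ℝ, ∀ k, WNormP N p s θ₁ θ₂ γ (u k) (v k) ^ (1 / p) ≤ M := by
  have hp0 : (0:ℝ) < p := by linarith
  have hN' : (1:ℝ) ≤ (N:ℝ) := by exact_mod_cast hN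
  have hd : (0:ℝ) < (N:ℝ) - s * p - (θ₁ + θ₂) := by linarith
  have hPpos : 0 < pStar N p s (θ₁ + θ₂) β := by
    rw [pStar]; exact div_pos (mul_pos hp0 (by linarith)) hd
  have hpP : p < pStar N p s (θ₁ + θ₂) β := by
    rw [pStar, lt_div_iff₀ hd]
    nlinarith [mul_pos hp0 (show (0:ℝ) < s * p + (θ₁ + θ₂) - β by linarith)]
  have hSpos : 0 < pSharp N p s (θ₁ + θ₂) δ μ := by
    rw [pSharp]; exact div_pos (mul_pos hp0 (by linarith)) hd
  have hPS : pStar N p s (θ₁ + θ₂) β ≤ 2 * pSharp N p s (θ₁ + θ₂) δ μ := by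
    rw [pStar, pSharp, ← mul_div_assoc, div_le_div_iff₀ hd hd]
    nlinarith [mul_pos hp0 (show (0:ℝ) < (N:ℝ) + β - 2 * δ - μ by linarith), hd]
  have hA : ∀ k, 0 ≤ Qsharp N (pSharp N p s (θ₁ + θ₂) δ μ) δ μ (u k) (v k) :=
    fun k => integral_nonneg fun z => by positivity
  have hB : ∀ k, 0 ≤ QstarF N (pStar N p s (θ₁ + θ₂) β) β η a b (u k) (v k) :=
    fun k => integral_nonneg fun x => by positivity
  exact aux_ps_bound p (pStar N p s (θ₁ + θ₂) β) (pSharp N p s (θ₁ + θ₂) δ μ) c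
    (fun k => WNormP N p s θ₁ θ₂ γ (u k) (v k))
    (fun k => Qsharp N (pSharp N p s (θ₁ + θ₂) δ μ) δ μ (u k) (v k))
    (fun k => QstarF N (pStar N p s (θ₁ + θ₂) β) β η a b (u k) (v k))
    hp hpP hPpos hSpos hPS hA hB hI hI'


end
end
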